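/- arXiv:2601.12772 — 2 statements merged into one kernel-verified Lean document; each statement's English description precedes it below -/
import Mathlib

section
/- Let S ⊆ ℕ² be semilinear (a finite union of linear sets). Then there exists M ≥ 1 such that for every x ∈ ℕ, the fiber S_x = {y : (x,y) ∈ S} is eventually periodic with period M. Consequently, if the minimal eventual periods of the fibers of a set S ⊆ ℕ² are unbounded, then S is not semilinear. -/
/-- A linear subset of ℕ²: a base vector plus ℕ-combinations of finitely many period vectors. -/
def IsLinear (S : Set (ℕ × ℕ)) : Prop :=
  ∃ (b : ℕ × ℕ) (k : ℕ) (v : Fin k → ℕ × ℕ),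
    S = {p | ∃ l : Fin k → ℕ, p = b + ∑ i, l i • v i}

/-- A semilinear set is a finite union of linear sets. -/
def IsSemilinear (S : Set (ℕ × ℕ)) : Prop :=
  ∃ (n : ℕ) (T : Fin n → Set (ℕ × ℕ)), (∀ i, IsLinear (T i)) ∧ S = ⋃ i, T i

/-- `T` is eventually periodic with period `M`. -/
def EvPeriodic (T : Set ℕ) (M : ℕ) : Prop :=
  ∃ N : ℕ, ∀ y ≥ N, (y ∈ T ↔ y + M ∈ T)

/-!
If a linear set `b + ℕ v₁ + ⋯ + ℕ vₖ` has a vertical period `vᵢ = (0, a)` with `a > 0`, every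
fiber is closed under `y ↦ y + a`. Such a subset of `ℕ` is eventually `a`-periodic: in each
residue class mod `a` it is an up-set, so at most one `y` per class has `y ∉ T` but `y + a ∈ T`.
Otherwise every period with first coordinate `0` vanishes, and the fiber over `x` is bounded by
`b.2 + x * ∑ (vᵢ).2`, hence eventually empty. For a finite union of linear sets, the product of
the periods of the pieces is a common period.
-/

namespace EvPeriodic

theorem of_add_mem {T : Set ℕ} {M : ℕ} (hM : 0 < M) (hT : ∀ y ∈ T, y + M ∈ T) :
    EvPeriodic T M := by
  have add_mul_mem : ∀ y ∈ T, ∀ c, y + M * c ∈ T := by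
    intro y hy c
    induction c with
    | zero => simpa using hy
    | succ c ih => simpa [mul_add_one, ← add_assoc] using hT _ ih
  set bad := {y | y ∉ T ∧ y + M ∈ T}
  have bad_eq : ∀ y ∈ bad, ∀ z ∈ bad, y ≤ z → y ≡ z [MOD M] → y = z := by
    rintro y ⟨-, hy⟩ z ⟨hz, -⟩ hyz hmod
    obtain ⟨_ | c, hc⟩ := (Nat.modEq_iff_dvd' hyz).mp hmod
    · omega
    · have hz_eq : z = y + M + M * c := by rw [mul_add_one] at hc; omega
      exact absurd (hz_eq ▸ add_mul_mem _ hy c) hz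
  have bad_finite : bad.Finite := by
    refine Set.Finite.of_finite_image (f := (· % M)) ((Set.finite_Iio M).subset ?_) ?_
    · rintro _ ⟨y, -, rfl⟩
      exact Nat.mod_lt y hM
    · intro y hy z hz hmod
      rcases le_total y z with h | h
      exacts [bad_eq y hy z hz h hmod, (bad_eq z hz y hy h hmod.symm).symm]
  obtain ⟨N, hN⟩ := bad_finite.bddAbove
  refine ⟨N + 1, fun y hy => ⟨hT y, fun hyM => ?_⟩⟩
  by_contra hyT
  exact absurd (hN ⟨hyT, hyM⟩) (by omega)

theorem of_bddAbove {T : Set ℕ} (hT : BddAbove T) (M : ℕ) : EvPeriodic T M := by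
  obtain ⟨N, hN⟩ := hT
  exact ⟨N + 1, fun y hy => iff_of_false (fun h => by have := hN h; omega)
    (fun h => by have := hN h; omega)⟩

theorem mul {T : Set ℕ} {M : ℕ} (h : EvPeriodic T M) (c : ℕ) : EvPeriodic T (M * c) := by
  obtain ⟨N, hN⟩ := h
  refine ⟨N, fun y hy => ?_⟩
  induction c with
  | zero => simp
  | succ c ih => rw [mul_add_one, ← add_assoc]; exact ih.trans (hN _ (by omega))

theorem iUnion {ι : Type*} [Finite ι] {T : ι → Set ℕ} {M : ℕ} (h : ∀ i, EvPeriodic (T i) M) :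
    EvPeriodic (⋃ i, T i) M := by
  choose N hN using h
  obtain ⟨N₀, hN₀⟩ := Finite.bddAbove_range N
  refine ⟨N₀, fun y hy => ?_⟩
  simp only [Set.mem_iUnion]
  exact exists_congr fun i => hN i y (le_trans (hN₀ ⟨i, rfl⟩) hy)

end EvPeriodic

def linearSet {k : ℕ} (b : ℕ × ℕ) (v : Fin k → ℕ × ℕ) : Set (ℕ × ℕ) :=
  {p | ∃ l : Fin k → ℕ, p = b + ∑ i, l i • v i}

section linearSet

variable {k : ℕ} {b : ℕ × ℕ} {v : Fin k → ℕ × ℕ} {p : ℕ × ℕ}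

theorem add_mem_linearSet (hp : p ∈ linearSet b v) (i : Fin k) : p + v i ∈ linearSet b v := by
  obtain ⟨l, rfl⟩ := hp
  refine ⟨l + Pi.single i 1, ?_⟩
  simp only [Pi.add_apply, add_smul, Finset.sum_add_distrib, Pi.single_apply, ite_smul,
    one_smul, zero_smul, Finset.sum_ite_eq', Finset.mem_univ, if_true, add_assoc]

theorem snd_le_of_mem_linearSet (hv : ∀ i, (v i).1 = 0 → (v i).2 = 0)
    (hp : p ∈ linearSet b v) : p.2 ≤ b.2 + p.1 * ∑ i, (v i).2 := by
  obtain ⟨l, rfl⟩ := hp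
  simp only [Prod.fst_add, Prod.snd_add, Prod.fst_sum, Prod.snd_sum, Prod.smul_fst,
    Prod.smul_snd, smul_eq_mul]
  have term_le : ∀ i, l i * (v i).2 ≤ l i * (v i).1 * ∑ j, (v j).2 := by
    intro i
    rcases Nat.eq_zero_or_pos (v i).1 with h | h
    · simp [hv i h]
    · calc l i * (v i).2 ≤ l i * (v i).1 * (v i).2 := by gcongr; exact Nat.le_mul_of_pos_right _ h
        _ ≤ l i * (v i).1 * ∑ j, (v j).2 := by
          gcongr
          exact Finset.single_le_sum (f := fun j => (v j).2) (fun j _ => Nat.zero_le _)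
            (Finset.mem_univ i)
  calc b.2 + ∑ i, l i * (v i).2 ≤ b.2 + ∑ i, l i * (v i).1 * ∑ j, (v j).2 :=
        add_le_add_right (Finset.sum_le_sum fun i _ => term_le i) _
    _ = b.2 + (∑ i, l i * (v i).1) * ∑ j, (v j).2 := by rw [Finset.sum_mul]
    _ ≤ b.2 + (b.1 + ∑ i, l i * (v i).1) * ∑ j, (v j).2 := by gcongr; omega

theorem exists_fiber_period_linearSet (b : ℕ × ℕ) (v : Fin k → ℕ × ℕ) :
    ∃ M, 1 ≤ M ∧ ∀ x, EvPeriodic {y | (x, y) ∈ linearSet b v} M := by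
  by_cases hv : ∃ i, (v i).1 = 0 ∧ 0 < (v i).2
  · obtain ⟨i, hi₁, hi₂⟩ := hv
    refine ⟨(v i).2, hi₂, fun x => EvPeriodic.of_add_mem hi₂ fun y hy => ?_⟩
    have vertical : (x, y) + v i = (x, y + (v i).2) := Prod.ext (by simp [hi₁]) rfl
    exact (vertical ▸ add_mem_linearSet hy i :)
  · push Not at hv
    refine ⟨1, le_rfl, fun x => EvPeriodic.of_bddAbove ⟨b.2 + x * ∑ i, (v i).2, ?_⟩ 1⟩
    exact fun y hy => snd_le_of_mem_linearSet (fun i hi => Nat.eq_zero_of_le_zero (hv i hi)) hy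

end linearSet

theorem IsLinear.exists_fiber_period {S : Set (ℕ × ℕ)} (hS : IsLinear S) :
    ∃ M, 1 ≤ M ∧ ∀ x, EvPeriodic {y | (x, y) ∈ S} M := by
  obtain ⟨b, k, v, rfl⟩ := hS
  exact exists_fiber_period_linearSet b v

theorem IsSemilinear.exists_fiber_period {S : Set (ℕ × ℕ)} (hS : IsSemilinear S) :
    ∃ M, 1 ≤ M ∧ ∀ x, EvPeriodic {y | (x, y) ∈ S} M := by
  obtain ⟨n, T, hT, rfl⟩ := hS
  choose M hM₁ hM using fun i => (hT i).exists_fiber_period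
  refine ⟨∏ i, M i, Finset.one_le_prod' fun i _ => hM₁ i, fun x => ?_⟩
  have fiber_iUnion : {y | (x, y) ∈ ⋃ i, T i} = ⋃ i, {y | (x, y) ∈ T i} := by
    ext; simp
  rw [fiber_iUnion]
  refine EvPeriodic.iUnion fun i => ?_
  obtain ⟨c, hc⟩ := Finset.dvd_prod_of_mem M (Finset.mem_univ i)
  exact hc ▸ (hM i x).mul c

theorem semilinear_uniform_fiber_period :
    (∀ S : Set (ℕ × ℕ), IsSemilinear S →
      ∃ M : ℕ, 1 ≤ M ∧ ∀ x : ℕ, EvPeriodic {y | (x, y) ∈ S} M) ∧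
    (∀ S : Set (ℕ × ℕ),
      (∀ B : ℕ, ∃ x : ℕ, ∀ M : ℕ, 1 ≤ M → M ≤ B → ¬ EvPeriodic {y | (x, y) ∈ S} M) →
      ¬ IsSemilinear S) := by
  refine ⟨fun S hS => hS.exists_fiber_period, fun S hunbounded hS => ?_⟩
  obtain ⟨M, hM, hper⟩ := hS.exists_fiber_period
  obtain ⟨x, hx⟩ := hunbounded M
  exact hx M hM le_rfl (hper x)
end

section
/- Fix y ≥ 1. The set D_y = {(x, C) ∈ ℕ² : 2^x > 3^y, C ≥ 1, (2^x - 3^y) ∣ C} is not semilinear: there is no finite collection of linear sets whose union equals D_y. -/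
def HasFiberPeriod (S : Set (ℕ × ℕ)) (P : ℕ) : Prop :=
  ∃ M : ℕ → ℕ, ∀ x c k, (x, c) ∈ S → M x < c → (x, c + k * P) ∈ S

theorem HasFiberPeriod.of_dvd {S : Set (ℕ × ℕ)} {P Q : ℕ} (hS : HasFiberPeriod S P)
    (hPQ : P ∣ Q) : HasFiberPeriod S Q := by
  obtain ⟨M, hM⟩ := hS
  obtain ⟨r, rfl⟩ := hPQ
  refine ⟨M, fun x c k hxc hc => ?_⟩
  simpa only [mul_assoc, mul_comm r P] using hM x c (k * r) hxc hc

theorem HasFiberPeriod.iUnion {ι : Type*} [Fintype ι] {T : ι → Set (ℕ × ℕ)} {P : ℕ}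
    (hT : ∀ i, HasFiberPeriod (T i) P) : HasFiberPeriod (⋃ i, T i) P := by
  choose M hM using hT
  refine ⟨fun x => ∑ i, M i x, fun x c k hxc hc => ?_⟩
  obtain ⟨i, hi⟩ := Set.mem_iUnion.mp hxc
  have hMi : M i x ≤ ∑ j, M j x :=
    Finset.single_le_sum (f := fun j => M j x) (fun _ _ => Nat.zero_le _) (Finset.mem_univ i)
  exact Set.mem_iUnion.mpr ⟨i, hM i x c k hi (hMi.trans_lt hc)⟩

theorem snd_sum_smul_le_mul_fst {ι : Type*} (s : Finset ι) (l : ι → ℕ) (v : ι → ℕ × ℕ) (K : ℕ)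
    (hv : ∀ i ∈ s, (v i).2 ≤ K * (v i).1) :
    (∑ i ∈ s, l i • v i).2 ≤ K * (∑ i ∈ s, l i • v i).1 := by
  refine Finset.sum_induction _ (fun w : ℕ × ℕ => w.2 ≤ K * w.1) ?_ (by simp) ?_
  · intro a b ha hb
    simp only [Prod.snd_add, Prod.fst_add, mul_add]
    omega
  · intro i hi
    simp only [Prod.smul_fst, Prod.smul_snd, smul_eq_mul, mul_left_comm K]
    exact Nat.mul_le_mul_left _ (hv i hi)

theorem sum_add_single_smul {ι M : Type*} [Fintype ι] [DecidableEq ι] [AddCommMonoid M]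
    (l : ι → ℕ) (v : ι → M) (j : ι) (m : ℕ) :
    ∑ i, (l + Pi.single j m : ι → ℕ) i • v i = ∑ i, l i • v i + m • v j := by
  simp [add_smul, Finset.sum_add_distrib, Pi.single_apply]

theorem IsLinear.exists_hasFiberPeriod {S : Set (ℕ × ℕ)} (hS : IsLinear S) :
    ∃ P, 0 < P ∧ HasFiberPeriod S P := by
  obtain ⟨b, k, v, rfl⟩ := hS
  by_cases hvert : ∃ j, (v j).1 = 0 ∧ 0 < (v j).2
  · obtain ⟨j, hj1, hj2⟩ := hvert
    refine ⟨(v j).2, hj2, fun _ => 0, ?_⟩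
    rintro x c m ⟨l, hl⟩ -
    refine ⟨l + Pi.single j m, ?_⟩
    rw [sum_add_single_smul, ← add_assoc, ← hl]
    ext <;> simp [hj1]
  · push Not at hvert
    set K := ∑ i, (v i).2
    have hslope : ∀ i ∈ Finset.univ, (v i).2 ≤ K * (v i).1 := by
      intro i _
      rcases Nat.eq_zero_or_pos (v i).1 with h0 | hpos
      · simpa [h0] using hvert i h0
      · calc (v i).2 ≤ K := Finset.single_le_sum (f := fun i => (v i).2)
                (fun _ _ => Nat.zero_le _) (Finset.mem_univ i)
          _ ≤ K * (v i).1 := Nat.le_mul_of_pos_right K hpos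
    refine ⟨1, one_pos, fun x => b.2 + K * x, ?_⟩
    rintro x c m ⟨l, hl⟩ (hc : b.2 + K * x < c)
    have hbelow := snd_sum_smul_le_mul_fst Finset.univ l v K hslope
    have hx : x = b.1 + (∑ i, l i • v i).1 := congrArg Prod.fst hl
    have hc' : c = b.2 + (∑ i, l i • v i).2 := congrArg Prod.snd hl
    have : K * (∑ i, l i • v i).1 ≤ K * x := Nat.mul_le_mul_left K (by omega)
    omega

theorem IsSemilinear.exists_hasFiberPeriod {S : Set (ℕ × ℕ)} (hS : IsSemilinear S) :
    ∃ P, 0 < P ∧ HasFiberPeriod S P := by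
  obtain ⟨n, T, hT, rfl⟩ := hS
  choose P hP hper using fun i => (hT i).exists_hasFiberPeriod
  refine ⟨∏ i, P i, Finset.prod_pos fun i _ => hP i, HasFiberPeriod.iUnion fun i => ?_⟩
  exact (hper i).of_dvd (Finset.dvd_prod_of_mem P (Finset.mem_univ i))

theorem not_hasFiberPeriod_of_fiber_eq_multiples {S : Set (ℕ × ℕ)} {P x d : ℕ} (hP : 0 < P)
    (hPd : P < d) (hfiber : ∀ c, (x, c) ∈ S ↔ 0 < c ∧ d ∣ c) : ¬ HasFiberPeriod S P := by
  rintro ⟨M, hM⟩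
  have hd : 0 < d := hP.trans hPd
  have hmem : (x, d * (M x + 1)) ∈ S := (hfiber _).mpr ⟨by positivity, dvd_mul_right d _⟩
  have hlt : M x < d * (M x + 1) := by nlinarith
  have hshift := ((hfiber _).mp (hM x _ 1 hmem hlt)).2
  rw [one_mul, Nat.dvd_add_right (dvd_mul_right d _)] at hshift
  exact absurd (Nat.le_of_dvd hP hshift) (not_le.mpr hPd)

theorem divisibility_core_not_semilinear_general (y : ℕ) :
    ¬ IsSemilinear {p : ℕ × ℕ | 3 ^ y < 2 ^ p.1 ∧ 1 ≤ p.2 ∧ (2 ^ p.1 - 3 ^ y) ∣ p.2} := by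
  intro hS
  obtain ⟨P, hP, hper⟩ := hS.exists_hasFiberPeriod
  have hx : 3 ^ y + P < 2 ^ (3 ^ y + P) := Nat.lt_two_pow_self
  refine not_hasFiberPeriod_of_fiber_eq_multiples hP (x := 3 ^ y + P) (d := 2 ^ (3 ^ y + P) - 3 ^ y)
    (by omega) (fun c => ?_) hper
  simp only [Set.mem_ofPred_eq, Nat.one_le_iff_ne_zero, Nat.pos_iff_ne_zero]
  exact ⟨fun h => h.2, fun h => ⟨by omega, h⟩⟩

theorem divisibility_core_not_semilinear (y : ℕ) (hy : 1 ≤ y) :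
    ¬ IsSemilinear {p : ℕ × ℕ | 3 ^ y < 2 ^ p.1 ∧ 1 ≤ p.2 ∧ (2 ^ p.1 - 3 ^ y) ∣ p.2} :=
  divisibility_core_not_semilinear_general y
end
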